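/- For every integer t ≥ 3, if n = t(t+1)/2 − 1 then P(n) = t + 2; and if t = 2, i.e., n = 2, then P(n) = 2. -/
import Mathlib


open scoped BigOperators

/-- Boundary of a set of naturals: elements whose predecessor (in ℤ) or successor
is not in the set. Note `z = 0` is always a boundary element of a set containing it,
since `-1` is never in a set of naturals. -/
def bdry (A : Set ℕ) : Set ℕ := {z | z ∈ A ∧ ¬(1 ≤ z ∧ z - 1 ∈ A ∧ z + 1 ∈ A)}

/-- Volume: sum of the elements. -/
noncomputable def vol (A : Set ℕ) : ℕ := ∑ᶠ z ∈ A, z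

/-- Perimeter: sum of the boundary elements. -/
noncomputable def per (A : Set ℕ) : ℕ := ∑ᶠ z ∈ bdry A, z

/-- Minimum perimeter over subsets of ℕ of volume `n`. -/
noncomputable def P (n : ℕ) : ℕ := sInf {p | ∃ A : Set ℕ, vol A = n ∧ per A = p}

/-- Minimum perimeter of the complement over subsets of ℕ of volume `n`. -/
noncomputable def Q (n : ℕ) : ℕ := sInf {p | ∃ A : Set ℕ, vol A = n ∧ per Aᶜ = p}

noncomputable def f (n : ℕ) : ℕ := (⌈(-1 + Real.sqrt (1 + 8 * n)) / 2⌉).toNat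

noncomputable def g (n : ℕ) : ℕ := f n * (f n + 1) / 2 - n

/- ---------- auxiliary lemmas ---------- -/

lemma bdry_subset' (A : Set ℕ) : bdry A ⊆ A := fun _ hz => hz.1

lemma finite_of_vol_ne_zero {A : Set ℕ} (h : vol A ≠ 0) : A.Finite := by
  by_contra hinf
  apply h
  apply finsum_mem_eq_zero_of_infinite
  have hsub : A \ {0} ⊆ A ∩ Function.support (fun z : ℕ => z) := by
    intro x hx
    exact ⟨hx.1, by simpa [Function.mem_support] using hx.2⟩
  have hAinf : A.Infinite := hinf
  exact Set.Infinite.mono hsub (hAinf.diff (Set.finite_singleton 0))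

lemma vol_eq_sum {A : Set ℕ} (h : A.Finite) : vol A = ∑ z ∈ h.toFinset, z := by
  rw [vol, ← finsum_mem_coe_finset, Set.Finite.coe_toFinset]

lemma per_eq_sum {A : Set ℕ} (h : A.Finite) :
    per A = ∑ z ∈ (h.subset (bdry_subset' A)).toFinset, z := by
  rw [per, ← finsum_mem_coe_finset, Set.Finite.coe_toFinset]

lemma sum_le_per {A : Set ℕ} (h : A.Finite) {B : Finset ℕ} (hB : ↑B ⊆ bdry A) :
    ∑ z ∈ B, z ≤ per A := by
  rw [per_eq_sum h]
  apply Finset.sum_le_sum_of_subset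
  intro x hx
  rw [Set.Finite.mem_toFinset]
  exact hB hx

lemma vol_le_gauss {A : Set ℕ} (h : A.Finite) {m : ℕ} (hmax : ∀ x ∈ A, x ≤ m) :
    2 * vol A ≤ m * (m + 1) := by
  have hsub : h.toFinset ⊆ Finset.range (m + 1) := by
    intro x hx
    rw [Set.Finite.mem_toFinset] at hx
    rw [Finset.mem_range]
    exact Nat.lt_succ_of_le (hmax x hx)
  have h1 : ∑ z ∈ h.toFinset, z ≤ ∑ z ∈ Finset.range (m + 1), z :=
    Finset.sum_le_sum_of_subset hsub
  have h2 : (∑ z ∈ Finset.range (m + 1), z) * 2 = (m + 1) * m :=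
    Finset.sum_range_id_mul_two (m + 1)
  rw [vol_eq_sum h]
  nlinarith [h1, h2]

/-- Main lower bound. -/
lemma per_lower {t : ℕ} (ht : 3 ≤ t) {A : Set ℕ} (hA : vol A = t * (t + 1) / 2 - 1) :
    t + 2 ≤ per A := by
  set q := t * (t + 1) / 2 with hq
  have h2q : 2 * q = t * (t + 1) := by
    rw [hq, Nat.mul_div_cancel' ((Nat.even_mul_succ_self t).two_dvd)]
  have hq6 : 6 ≤ q := by
    have h12 : 12 ≤ t * (t + 1) := Nat.mul_le_mul ht (show 4 ≤ t + 1 by omega)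
    omega
  set n := q - 1 with hn
  have hn5 : 5 ≤ n := by omega
  have hfin : A.Finite := finite_of_vol_ne_zero (by omega)
  set F := hfin.toFinset with hF
  have hmemF : ∀ x, x ∈ F ↔ x ∈ A := fun x => Set.Finite.mem_toFinset hfin
  have hFv : ∑ z ∈ F, z = n := by rw [← vol_eq_sum hfin, hA]
  have hFne : F.Nonempty := by
    by_contra hne
    rw [Finset.not_nonempty_iff_eq_empty] at hne
    rw [hne, Finset.sum_empty] at hFv
    omega
  set m := F.max' hFne with hm
  have hmA : m ∈ A := (hmemF m).1 (F.max'_mem hFne)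
  have hmax : ∀ x ∈ A, x ≤ m := fun x hx => F.le_max' x ((hmemF x).2 hx)
  have hmbdry : m ∈ bdry A := by
    refine ⟨hmA, ?_⟩
    rintro ⟨-, -, hsucc⟩
    exact absurd (hmax _ hsucc) (by omega)
  have hperm : m ≤ per A := by
    have := sum_le_per hfin (B := {m}) (by intro x hx; simp at hx; subst hx; exact hmbdry)
    simpa using this
  by_cases hbig : t + 2 ≤ m
  · omega
  push_neg at hbig
  have h2v : 2 * n ≤ m * (m + 1) := hA ▸ vol_le_gauss hfin hmax
  have hmge : t ≤ m := by
    by_contra hc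
    push_neg at hc
    have h1 : m + 1 ≤ t := hc
    have hmul : (m + 1) * (m + 1) ≤ t * t := Nat.mul_le_mul h1 h1
    have e2 : 2 * n + 2 = 2 * q := by omega
    nlinarith [h2v, hmul, e2, h2q, hn5]
  have hmcase : m = t ∨ m = t + 1 := by omega
  rcases hmcase with hmt | hmt
  · -- m = t : A must be {0?,2,...,t}, boundary contains 2 and t
    subst hmt
    have hsubF : F ⊆ Finset.range (m + 1) := by
      intro x hx
      rw [Finset.mem_range]
      exact Nat.lt_succ_of_le (hmax x ((hmemF x).1 hx))
    have hrange2 : (∑ z ∈ Finset.range (m + 1), z) * 2 = (m + 1) * m :=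
      Finset.sum_range_id_mul_two (m + 1)
    have hcomm : (m + 1) * m = m * (m + 1) := by ring
    have hrange : ∑ z ∈ Finset.range (m + 1), z = q := by omega
    have hdiff : ∑ z ∈ Finset.range (m + 1) \ F, z = 1 := by
      have hsd : ∑ z ∈ Finset.range (m + 1) \ F, z + ∑ z ∈ F, z
          = ∑ z ∈ Finset.range (m + 1), z := Finset.sum_sdiff hsubF
      omega
    have hle1 : ∀ x ∈ Finset.range (m + 1) \ F, x ≤ 1 := by
      intro x hx
      calc x ≤ ∑ z ∈ Finset.range (m + 1) \ F, z :=
            Finset.single_le_sum (f := fun z => z) (fun _ _ => Nat.zero_le _) hx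
        _ = 1 := hdiff
    have hmemA : ∀ x, 2 ≤ x → x ≤ m → x ∈ A := by
      intro x h2x hxm
      by_contra hxA
      have hxd : x ∈ Finset.range (m + 1) \ F := by
        rw [Finset.mem_sdiff, Finset.mem_range]
        exact ⟨Nat.lt_succ_of_le hxm, fun hc => hxA ((hmemF x).1 hc)⟩
      exact absurd (hle1 x hxd) (by omega)
    have h1A : (1 : ℕ) ∉ A := by
      intro h1A
      have hx : ∃ x ∈ Finset.range (m + 1) \ F, x ≠ 0 := by
        by_contra hc
        push_neg at hc
        have : ∑ z ∈ Finset.range (m + 1) \ F, z = 0 :=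
          Finset.sum_eq_zero (fun x hx => hc x hx)
        omega
      obtain ⟨x, hxd, hx0⟩ := hx
      have hx1 : x = 1 := by have := hle1 x hxd; omega
      subst hx1
      rw [Finset.mem_sdiff] at hxd
      exact hxd.2 ((hmemF 1).2 h1A)
    have h2bdry : (2 : ℕ) ∈ bdry A := by
      refine ⟨hmemA 2 le_rfl (by omega), ?_⟩
      rintro ⟨-, hpred, -⟩
      exact h1A hpred
    have hpair : (↑({2, m} : Finset ℕ) : Set ℕ) ⊆ bdry A := by
      intro x hx
      simp only [Finset.coe_insert, Finset.coe_singleton, Set.mem_insert_iff,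
        Set.mem_singleton_iff] at hx
      rcases hx with rfl | rfl
      · exact h2bdry
      · exact hmbdry
    have := sum_le_per hfin hpair
    rw [Finset.sum_pair (by omega : (2 : ℕ) ≠ m)] at this
    omega
  · -- m = t + 1
    by_contra hper
    push_neg at hper
    have hbd : ∀ b ∈ bdry A, b = 0 ∨ b = m := by
      intro b hb
      by_contra hc
      push_neg at hc
      have hpair : (↑({b, m} : Finset ℕ) : Set ℕ) ⊆ bdry A := by
        intro x hx
        simp only [Finset.coe_insert, Finset.coe_singleton, Set.mem_insert_iff,
          Set.mem_singleton_iff] at hx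
        rcases hx with rfl | rfl
        · exact hb
        · exact hmbdry
      have := sum_le_per hfin hpair
      rw [Finset.sum_pair hc.2] at this
      have hb1 : 1 ≤ b := by omega
      omega
    by_cases htA : t ∈ A
    · -- full interval [0, t+1] ⊆ A, volume too big
      have key : ∀ k, k ≤ t → t - k ∈ A := by
        intro k
        induction k with
        | zero => intro _; simpa using htA
        | succ k ih =>
          intro hk
          have hIH : t - k ∈ A := ih (by omega)
          have hne0 : t - k ≠ 0 := by omega
          have hnem : t - k ≠ m := by omega
          have hnb : t - k ∉ bdry A := fun hc => by rcases hbd _ hc with h | h <;> omega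
          have : 1 ≤ t - k ∧ (t - k) - 1 ∈ A ∧ (t - k) + 1 ∈ A := by
            by_contra hc
            exact hnb ⟨hIH, hc⟩
          have heq : t - (k + 1) = (t - k) - 1 := by omega
          rw [heq]
          exact this.2.1
      have hsubR : Finset.range (t + 2) ⊆ F := by
        intro x hx
        rw [Finset.mem_range] at hx
        rw [hmemF]
        rcases Nat.lt_or_ge x (t + 1) with hlt | hge
        · have : x = t - (t - x) := by omega
          rw [this]
          exact key (t - x) (by omega)
        · have : x = m := by omega
          rw [this]; exact hmA
      have hsum : ∑ z ∈ Finset.range (t + 2), z ≤ ∑ z ∈ F, z :=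
        Finset.sum_le_sum_of_subset hsubR
      have hr2 : (∑ z ∈ Finset.range (t + 2), z) * 2 = (t + 2) * (t + 1) :=
        Finset.sum_range_id_mul_two (t + 2)
      have e2 : 2 * n + 2 = 2 * q := by omega
      nlinarith [hsum, hr2, e2, h2q, hFv]
    · -- A ⊆ {0, t+1}, volume too small
      have hempty : ∀ x ∈ A, x = 0 ∨ x = m := by
        by_contra hc
        push_neg at hc
        obtain ⟨x, hxA, hx0, hxm⟩ := hc
        set G := F.filter (fun y => 1 ≤ y ∧ y ≤ t) with hG
        have hGne : G.Nonempty := by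
          refine ⟨x, ?_⟩
          rw [hG, Finset.mem_filter]
          have : x ≤ m := hmax x hxA
          exact ⟨(hmemF x).2 hxA, by omega, by omega⟩
        set k := G.max' hGne with hk
        have hkG : k ∈ G := G.max'_mem hGne
        rw [hG, Finset.mem_filter] at hkG
        obtain ⟨hkF, hk1, hkt⟩ := hkG
        have hkA : k ∈ A := (hmemF k).1 hkF
        have hknt : k ≠ t := fun h => htA (h ▸ hkA)
        have hnb : k ∉ bdry A := fun hc => by rcases hbd _ hc with h | h <;> omega
        have hsucc : k + 1 ∈ A := by
          by_contra hs
          exact hnb ⟨hkA, fun ⟨_, _, h3⟩ => hs h3⟩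
        have : k + 1 ∈ G := by
          rw [hG, Finset.mem_filter]
          exact ⟨(hmemF _).2 hsucc, by omega, by omega⟩
        have := G.le_max' _ this
        omega
      have hsubF : F ⊆ ({0, m} : Finset ℕ) := by
        intro y hy
        have := hempty y ((hmemF y).1 hy)
        simp only [Finset.mem_insert, Finset.mem_singleton]
        tauto
      have hle : ∑ z ∈ F, z ≤ ∑ z ∈ ({0, m} : Finset ℕ), z :=
        Finset.sum_le_sum_of_subset hsubF
      rw [Finset.sum_pair (by omega : (0 : ℕ) ≠ m)] at hle
      have e2 : 2 * n + 2 = 2 * q := by omega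
      have h3t : 3 * t ≤ t * t := Nat.mul_le_mul ht (le_refl t)
      nlinarith [hle, hFv, e2, h2q, h3t, hn5]

/-- Lower bound for n = 2. -/
lemma per_lower2 {A : Set ℕ} (hA : vol A = 2) : 2 ≤ per A := by
  have hfin : A.Finite := finite_of_vol_ne_zero (by omega)
  set F := hfin.toFinset with hF
  have hmemF : ∀ x, x ∈ F ↔ x ∈ A := fun x => Set.Finite.mem_toFinset hfin
  have hFv : ∑ z ∈ F, z = 2 := by rw [← vol_eq_sum hfin, hA]
  have hFne : F.Nonempty := by
    by_contra hne
    rw [Finset.not_nonempty_iff_eq_empty] at hne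
    rw [hne, Finset.sum_empty] at hFv
    omega
  set m := F.max' hFne with hm
  have hmA : m ∈ A := (hmemF m).1 (F.max'_mem hFne)
  have hmax : ∀ x ∈ A, x ≤ m := fun x hx => F.le_max' x ((hmemF x).2 hx)
  have hmbdry : m ∈ bdry A := by
    refine ⟨hmA, ?_⟩
    rintro ⟨-, -, hsucc⟩
    exact absurd (hmax _ hsucc) (by omega)
  have hperm : m ≤ per A := by
    have := sum_le_per hfin (B := {m}) (by intro x hx; simp at hx; subst hx; exact hmbdry)
    simpa using this
  have h2v : 2 * vol A ≤ m * (m + 1) := vol_le_gauss hfin hmax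
  rw [hA] at h2v
  have : 2 ≤ m := by nlinarith [h2v]
  omega

theorem stmt_8 :
    (∀ t : ℕ, 3 ≤ t → P (t * (t + 1) / 2 - 1) = t + 2) ∧ P 2 = 2 := by
  constructor
  · intro t ht
    have h2q : 2 * (t * (t + 1) / 2) = t * (t + 1) := by
      rw [Nat.mul_div_cancel' ((Nat.even_mul_succ_self t).two_dvd)]
    have hq6 : 6 ≤ t * (t + 1) / 2 := by
      have h12 : 12 ≤ t * (t + 1) := Nat.mul_le_mul ht (show 4 ≤ t + 1 by omega)
      omega
    -- the witness set {2, ..., t}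
    have hmem : t + 2 ∈ {p | ∃ A : Set ℕ, vol A = t * (t + 1) / 2 - 1 ∧ per A = p} := by
      refine ⟨↑(Finset.Icc 2 t), ?_, ?_⟩
      · rw [vol, finsum_mem_coe_finset]
        have h1 : Finset.Icc 2 t = Finset.Ico 2 (t + 1) := by
          ext x; simp only [Finset.mem_Icc, Finset.mem_Ico]; omega
        have h2 : ∑ z ∈ Finset.Ico 0 2, z + ∑ z ∈ Finset.Ico 2 (t + 1), z
            = ∑ z ∈ Finset.Ico 0 (t + 1), z :=
          Finset.sum_Ico_consecutive _ (by omega) (by omega)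
        have h3 : ∑ z ∈ Finset.Ico 0 2, z = 1 := by decide
        have h4 : Finset.Ico 0 (t + 1) = Finset.range (t + 1) := by
          rw [Finset.range_eq_Ico]
        have h5 : (∑ z ∈ Finset.range (t + 1), z) * 2 = (t + 1) * t :=
          Finset.sum_range_id_mul_two (t + 1)
        rw [h4] at h2
        rw [h1]
        have : (t + 1) * t = t * (t + 1) := by ring
        omega
      · have hbd : bdry ↑(Finset.Icc 2 t) = ({2, t} : Set ℕ) := by
          ext z
          simp only [bdry, Set.mem_setOf_eq, Finset.coe_Icc, Set.mem_Icc,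
            Set.mem_insert_iff, Set.mem_singleton_iff]
          omega
        rw [per, hbd, finsum_mem_pair (by omega : (2 : ℕ) ≠ t)]
        omega
    apply le_antisymm
    · exact Nat.sInf_le hmem
    · exact le_csInf ⟨t + 2, hmem⟩ (by rintro p ⟨A, hvA, rfl⟩; exact per_lower ht hvA)
  · have hmem : 2 ∈ {p | ∃ A : Set ℕ, vol A = 2 ∧ per A = p} := by
      refine ⟨{2}, ?_, ?_⟩
      · rw [vol, finsum_mem_singleton]
      · have hbd : bdry {2} = ({2} : Set ℕ) := by
          ext z
          simp only [bdry, Set.mem_setOf_eq, Set.mem_singleton_iff]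
          constructor
          · rintro ⟨h, -⟩; exact h
          · rintro rfl
            exact ⟨rfl, by rintro ⟨-, h, -⟩; simp at h⟩
        rw [per, hbd, finsum_mem_singleton]
    apply le_antisymm
    · exact Nat.sInf_le hmem
    · exact le_csInf ⟨2, hmem⟩ (by rintro p ⟨A, hvA, rfl⟩; exact per_lower2 hvA)
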